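/- Let x, y ∈ {1,2}^*, let k ≥ 1 be an integer, and let v_f = M_$(k) · P(y) · M_0 · P(x) · (0,0,1,0,0)^T ∈ ℝ^5. If x is not a palindrome (x ≠ x^r) and y is a palindrome (y = y^r), then v_f[1] = v_f[2] = 0 and (|v_f[3]| + |v_f[4]|) / (Σ_{i=1}^5 |v_f[i]|) ≥ 2k/(2k+1). -/
import Mathlib


/-- Base-3 encoding of a string over `{1,2}` (a symbol `d : Fin 2` represents the
digit `d + 1`): `e(ε) = 0` and `e(u·d) = 3·e(u) + d` for `d ∈ {1,2}`. -/
def enc (u : List (Fin 2)) : ℕ :=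
  u.foldl (fun acc d => 3 * acc + (d.val + 1)) 0

/-- The affine transition matrix `M_1` for the symbol `1`. -/
def M1 : Matrix (Fin 5) (Fin 5) ℝ :=
  !![4, 1, 1, 1, 1;
     0, 1, 1, 0, 0;
     0, 0, 3, 0, 0;
     0, 0, 0, 1, 0;
     -3, -1, -4, -1, 0]

/-- The affine transition matrix `M_2` for the symbol `2`. -/
def M2 : Matrix (Fin 5) (Fin 5) ℝ :=
  !![5, 2, 2, 2, 2;
     0, 1, 2, 0, 0;
     0, 0, 3, 0, 0;
     0, 0, 0, 1, 0;
     -4, -2, -6, -2, -1]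

/-- The affine transition matrix `M_0` for the symbol `0`. -/
def M0 : Matrix (Fin 5) (Fin 5) ℝ :=
  !![0, 0, 0, 0, 0;
     0, 0, 0, 0, 0;
     1, 1, 1, 1, 1;
     1, -1, 0, 0, 0;
     -1, 1, 0, 0, 0]

/-- The affine transition matrix `M_$(k)` for the right end-marker. -/
def Mdollar (k : ℝ) : Matrix (Fin 5) (Fin 5) ℝ :=
  !![k, -k, 0, 0, 0;
     -k, k, 0, 0, 0;
     0, 0, 0, k, 0;
     0, 0, 0, -k, 0;
     1, 1, 1, 1, 1]

/-- The transition matrix associated with a symbol of `{1,2}`. -/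
def Msym (d : Fin 2) : Matrix (Fin 5) (Fin 5) ℝ := if d = 0 then M1 else M2

/-- `applyStr u v = M_{u[n]} ⋯ M_{u[2]} M_{u[1]} v`. -/
def applyStr (u : List (Fin 2)) (v : Fin 5 → ℝ) : Fin 5 → ℝ :=
  u.foldl (fun w d => (Msym d).mulVec w) v

lemma enc_foldl (u : List (Fin 2)) (m : ℕ) :
    u.foldl (fun acc d => 3 * acc + (d.val + 1)) m = 3 ^ u.length * m + enc u := by
  induction u generalizing m with
  | nil => simp [enc]
  | cons d u ih =>
    simp only [List.foldl_cons, List.length_cons]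
    rw [ih, show enc (d :: u) = 3 ^ u.length * (d.val + 1) + enc u from by
      simp only [enc, List.foldl_cons]
      conv_lhs => rw [show (3 * 0 + (d.val + 1)) = d.val + 1 by ring]
      rw [ih (d.val + 1)]; rfl]
    ring

lemma enc_cons (d : Fin 2) (u : List (Fin 2)) :
    enc (d :: u) = 3 ^ u.length * (d.val + 1) + enc u := by
  simp only [enc, List.foldl_cons]
  conv_lhs => rw [show (3 * 0 + (d.val + 1)) = d.val + 1 by ring]
  rw [enc_foldl]; rfl

lemma enc_append (u : List (Fin 2)) (d : Fin 2) :
    enc (u ++ [d]) = 3 * enc u + (d.val + 1) := by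
  simp [enc, List.foldl_append]

lemma enc_inj : Function.Injective enc := by
  intro u
  induction u using List.reverseRecOn with
  | nil =>
    intro v hv
    cases v using List.reverseRecOn with
    | nil => rfl
    | append_singleton w d =>
      rw [enc_append] at hv
      simp only [enc, List.foldl_nil] at hv; omega
  | append_singleton u d ih =>
    intro v hv
    cases v using List.reverseRecOn with
    | nil =>
      rw [enc_append] at hv
      simp only [enc, List.foldl_nil] at hv; omega
    | append_singleton w e =>
      rw [enc_append, enc_append] at hv
      have hd : d.val < 2 := d.isLt
      have he : e.val < 2 := e.isLt
      have h1 : d = e := Fin.ext (by omega)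
      have h2 : enc u = enc w := by omega
      rw [ih h2, h1]

lemma applyStr_key (u : List (Fin 2)) : ∀ a b c dd ee : ℝ, a + b + c + dd + ee = 1 →
    applyStr u ![a, b, c, dd, ee] =
      ![3 ^ u.length * a + enc u,
        b + enc u.reverse * c,
        3 ^ u.length * c,
        dd,
        1 - (3 ^ u.length * a + enc u) - (b + enc u.reverse * c) - 3 ^ u.length * c - dd] := by
  induction u with
  | nil =>
    intro a b c dd ee h
    funext i; fin_cases i <;> simp [applyStr, enc] <;> linarith
  | cons d u ih =>
    intro a b c dd ee h
    have step : applyStr (d :: u) ![a, b, c, dd, ee]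
        = applyStr u ((Msym d).mulVec ![a, b, c, dd, ee]) := rfl
    have hlen : (d :: u).length = u.length + 1 := rfl
    have hrev : (d :: u).reverse = u.reverse ++ [d] := by simp
    have hd2 : d = 0 ∨ d = 1 := by omega
    rcases hd2 with rfl | rfl
    · have hv : (Msym (0 : Fin 2)).mulVec ![a, b, c, dd, ee]
          = ![3 * a + 1, b + c, 3 * c, dd, 1 - (3 * a + 1) - (b + c) - 3 * c - dd] := by
        funext i; fin_cases i <;>
          simp [Msym, M1, Matrix.mulVec, dotProduct, Fin.sum_univ_five] <;> linarith
      rw [step, hv, ih _ _ _ _ _ (by ring)]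
      funext i; fin_cases i <;>
        · simp [hlen, hrev, enc_cons, enc_append, Fin.val_zero, Fin.val_one]
          try push_cast
          try ring
    · have hv : (Msym (1 : Fin 2)).mulVec ![a, b, c, dd, ee]
          = ![3 * a + 2, b + 2 * c, 3 * c, dd, 1 - (3 * a + 2) - (b + 2 * c) - 3 * c - dd] := by
        funext i; fin_cases i <;>
          simp [Msym, M2, Matrix.mulVec, dotProduct, Fin.sum_univ_five] <;> linarith
      rw [step, hv, ih _ _ _ _ _ (by ring)]
      funext i; fin_cases i <;>
        · simp [hlen, hrev, enc_cons, enc_append, Fin.val_zero, Fin.val_one]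
          try push_cast
          try ring

theorem stmt_11 (x y : List (Fin 2)) (k : ℕ) (hk : 1 ≤ k)
    (hx : x ≠ x.reverse) (hy : y = y.reverse) :
    (Mdollar (k : ℝ)).mulVec (applyStr y (M0.mulVec (applyStr x ![0, 0, 1, 0, 0]))) 0 = 0 ∧
    (Mdollar (k : ℝ)).mulVec (applyStr y (M0.mulVec (applyStr x ![0, 0, 1, 0, 0]))) 1 = 0 ∧
    (2 * (k : ℝ)) / (2 * (k : ℝ) + 1) ≤
      (|(Mdollar (k : ℝ)).mulVec (applyStr y (M0.mulVec (applyStr x ![0, 0, 1, 0, 0]))) 2| +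
       |(Mdollar (k : ℝ)).mulVec (applyStr y (M0.mulVec (applyStr x ![0, 0, 1, 0, 0]))) 3|) /
      (∑ i : Fin 5,
        |(Mdollar (k : ℝ)).mulVec (applyStr y (M0.mulVec (applyStr x ![0, 0, 1, 0, 0]))) i|) := by
  set X : ℝ := (enc x : ℝ) with hX
  set Xr : ℝ := (enc x.reverse : ℝ) with hXr
  set D : ℝ := X - Xr with hD
  -- Phase 1
  have h1 : applyStr x ![0, 0, 1, 0, 0] =
      ![X, Xr, 3 ^ x.length, 0, 1 - X - Xr - 3 ^ x.length - 0] := by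
    have := applyStr_key x 0 0 1 0 0 (by ring)
    rw [this]
    funext i; fin_cases i <;> simp <;> ring
  -- M0 step
  have h2 : M0.mulVec (applyStr x ![0, 0, 1, 0, 0]) = ![0, 0, 1, D, -D] := by
    rw [h1]
    funext i; fin_cases i <;>
      simp [M0, Matrix.mulVec, dotProduct, Fin.sum_univ_five, hD] <;> ring
  -- Phase 2
  have h3 : applyStr y (M0.mulVec (applyStr x ![0, 0, 1, 0, 0])) =
      ![(enc y : ℝ), (enc y : ℝ), 3 ^ y.length, D,
        1 - ((enc y : ℝ)) - ((enc y : ℝ)) - 3 ^ y.length - D] := by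
    rw [h2, applyStr_key y 0 0 1 D (-D) (by ring)]
    funext i; fin_cases i <;> simp [← hy] <;> ring
  -- Final matrix
  have h4 : (Mdollar (k : ℝ)).mulVec (applyStr y (M0.mulVec (applyStr x ![0, 0, 1, 0, 0])))
      = ![0, 0, (k : ℝ) * D, -((k : ℝ) * D), 1] := by
    rw [h3]
    funext i; fin_cases i <;>
      simp [Mdollar, Matrix.mulVec, dotProduct, Fin.sum_univ_five] <;> ring
  rw [h4]
  have hkpos : (1 : ℝ) ≤ (k : ℝ) := by exact_mod_cast hk
  have hDabs : 1 ≤ |D| := by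
    have hne : enc x ≠ enc x.reverse := fun h => hx (enc_inj h)
    have h' : enc x.reverse + 1 ≤ enc x ∨ enc x + 1 ≤ enc x.reverse := by omega
    rcases h' with h | h
    · refine le_abs.mpr (Or.inl ?_)
      have : Xr + 1 ≤ X := by rw [hX, hXr]; exact_mod_cast h
      simp only [hD]; linarith
    · refine le_abs.mpr (Or.inr ?_)
      have : X + 1 ≤ Xr := by rw [hX, hXr]; exact_mod_cast h
      simp only [hD]; linarith
  refine ⟨by simp, by simp, ?_⟩
  have habs : |(k : ℝ) * D| = (k : ℝ) * |D| := by
    rw [abs_mul, abs_of_nonneg (by linarith)]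
  have hsum : (∑ i : Fin 5, |(![0, 0, (k : ℝ) * D, -((k : ℝ) * D), 1] : Fin 5 → ℝ) i|)
      = 2 * ((k : ℝ) * |D|) + 1 := by
    simp [Fin.sum_univ_five, abs_neg, habs]
    ring
  rw [hsum]
  simp only [Matrix.cons_val_two, Matrix.tail_cons, Matrix.head_cons, Matrix.cons_val_three,
    Matrix.cons_val_zero, Matrix.cons_val_one]
  rw [abs_neg, habs]
  rw [div_le_div_iff₀ (by positivity) (by positivity)]
  nlinarith [mul_le_mul_of_nonneg_left hDabs (le_of_lt (show (0:ℝ) < (k:ℝ) by linarith))]
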